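/- For every integer k ≥ 1, the function x ↦ x f_{k−1}(x)/f_k(x) is strictly increasing on (0,∞), and x f_{k−1}(x)/f_k(x) → k as x → 0⁺. -/

import Mathlib

open Filter

/-- `fpois j μ = ∑_{i ≥ j} e^{−μ} μ^i / i!`, the probability that a Poisson(μ)
random variable is at least `j`. -/
noncomputable def fpois (j : ℕ) (μ : ℝ) : ℝ :=
  ∑' i : ℕ, if j ≤ i then Real.exp (-μ) * μ ^ i / (Nat.factorial i) else 0

/-! With `w_i(x) = e^{-x} x^i / i!`, the identity `x w_i = (i + 1) w_{i+1}` gives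
`x f_{k-1}(x) = ∑_{i ≥ k} i w_i(x)`, so the ratio is the mean of the Poisson law conditioned on
`i ≥ k`. For `x < y` the likelihood ratio `w_i(y) / w_i(x)` is strictly increasing in `i`, which
forces the mean to increase. Near `0` the ratio is squeezed between `k` and `k e^x`, from
`e^{-x} x^k / k! ≤ f_k(x) ≤ x^k / k!`. -/

open Topology

theorem pow_mul_pow_lt_pow_mul_pow {R : Type*} [CommSemiring R] [LinearOrder R]
    [IsStrictOrderedRing R] {x y : R} (hx : 0 < x) (hxy : x < y) {p q : ℕ} (hpq : p < q) :
    x ^ q * y ^ p < x ^ p * y ^ q := by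
  obtain ⟨d, rfl⟩ := Nat.exists_eq_add_of_lt hpq
  have hd : x ^ (d + 1) < y ^ (d + 1) := pow_lt_pow_left₀ hxy hx.le (Nat.succ_ne_zero d)
  calc x ^ (p + d + 1) * y ^ p = x ^ p * y ^ p * x ^ (d + 1) := by ring
    _ < x ^ p * y ^ p * y ^ (d + 1) :=
      mul_lt_mul_of_pos_left hd (by have := hx.trans hxy; positivity)
    _ = x ^ p * y ^ (p + d + 1) := by ring

theorem tsum_mul_tsum_lt_tsum_mul_tsum_of_strictMono {ι : Type*} [LinearOrder ι] [Nontrivial ι]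
    {c u v : ι → ℝ} (hc : StrictMono c) (hu : Summable u) (hv : Summable v)
    (hcu : Summable fun i => c i * u i) (hcv : Summable fun i => c i * v i)
    (huv : ∀ ⦃p q⦄, p < q → u q * v p < u p * v q) :
    (∑' i, c i * u i) * ∑' i, v i < (∑' i, c i * v i) * ∑' i, u i := by
  have hD : HasSum (fun z : ι × ι => c z.1 * v z.1 * u z.2 - c z.1 * u z.1 * v z.2)
      ((∑' i, c i * v i) * ∑' i, u i - (∑' i, c i * u i) * ∑' i, v i) :=
    (hcv.hasSum.mul hu.hasSum (summable_mul_of_summable_norm hcv.norm hu.norm)).sub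
      (hcu.hasSum.mul hv.hasSum (summable_mul_of_summable_norm hcu.norm hv.norm))
  -- Symmetrising under `(p, q) ↦ (q, p)` makes every term of the double sum nonnegative.
  have hsymm : HasSum (fun z : ι × ι => (c z.1 - c z.2) * (v z.1 * u z.2 - u z.1 * v z.2))
      (2 * ((∑' i, c i * v i) * ∑' i, u i - (∑' i, c i * u i) * ∑' i, v i)) := by
    convert hD.add ((Equiv.prodComm ι ι).hasSum_iff.mpr hD) using 1
    · ext z
      simp only [Function.comp_apply, Equiv.prodComm_apply, Prod.fst_swap, Prod.snd_swap]
      ring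
    · ring
  have hlt : ∀ ⦃p q⦄, p < q → 0 < (c p - c q) * (v p * u q - u p * v q) := fun p q h =>
    mul_pos_of_neg_of_neg (sub_neg.2 (hc h)) (by linarith [huv h])
  have hnonneg : ∀ z : ι × ι, 0 ≤ (c z.1 - c z.2) * (v z.1 * u z.2 - u z.1 * v z.2) := by
    rintro ⟨p, q⟩
    rcases lt_trichotomy p q with h | rfl | h
    · exact (hlt h).le
    · simp
    · exact (hlt h).le.trans_eq (by ring)
  obtain ⟨p, q, hpq⟩ := exists_pair_lt ι
  have := hasSum_lt (f := fun _ => 0) (i := (p, q)) hnonneg (hlt hpq) hasSum_zero hsymm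
  linarith

noncomputable def poissonTerm (x : ℝ) (i : ℕ) : ℝ :=
  Real.exp (-x) * x ^ i / i.factorial

lemma poissonTerm_pos {x : ℝ} (hx : 0 < x) (i : ℕ) : 0 < poissonTerm x i := by
  unfold poissonTerm; positivity

lemma hasSum_poissonTerm (x : ℝ) : HasSum (poissonTerm x) 1 := by
  have h := (NormedSpace.expSeries_div_hasSum_exp x).mul_left (Real.exp (-x))
  rw [← Real.exp_eq_exp_ℝ, ← Real.exp_add, neg_add_cancel, Real.exp_zero] at h
  exact h.congr_fun fun i => mul_div_assoc _ _ _

lemma mul_poissonTerm (x : ℝ) (i : ℕ) :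
    x * poissonTerm x i = (i + 1 : ℕ) * poissonTerm x (i + 1) := by
  simp only [poissonTerm, Nat.factorial_succ]
  push_cast
  field_simp
  ring

lemma hasSum_fpois (j : ℕ) (x : ℝ) : HasSum (fun m => poissonTerm x (m + j)) (fpois j x) := by
  have hshift : Summable fun m => poissonTerm x (m + j) :=
    (summable_nat_add_iff j).mpr (hasSum_poissonTerm x).summable
  have htail := (hasSum_nat_add_iff (f := fun i => if j ≤ i then poissonTerm x i else 0) j).mp
    (by simpa using hshift.hasSum)
  rw [Finset.sum_eq_zero (fun i hi => if_neg (by simpa using hi)), add_zero] at htail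
  have hfpois : fpois j x = ∑' m, poissonTerm x (m + j) := htail.tsum_eq
  exact hfpois ▸ hshift.hasSum

lemma hasSum_mul_fpois (j : ℕ) (x : ℝ) :
    HasSum (fun m => ((m + j + 1 : ℕ) : ℝ) * poissonTerm x (m + j + 1)) (x * fpois j x) :=
  ((hasSum_fpois j x).mul_left x).congr_fun fun m => (mul_poissonTerm x (m + j)).symm

lemma poissonTerm_mul_poissonTerm_lt {x y : ℝ} (hx : 0 < x) (hxy : x < y) {p q : ℕ}
    (hpq : p < q) : poissonTerm x q * poissonTerm y p < poissonTerm x p * poissonTerm y q := by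
  have hy := hx.trans hxy
  calc poissonTerm x q * poissonTerm y p
      = Real.exp (-x) * Real.exp (-y) / (q.factorial * p.factorial) * (x ^ q * y ^ p) := by
        unfold poissonTerm; ring
    _ < Real.exp (-x) * Real.exp (-y) / (q.factorial * p.factorial) * (x ^ p * y ^ q) :=
        mul_lt_mul_of_pos_left (pow_mul_pow_lt_pow_mul_pow hx hxy hpq) (by positivity)
    _ = poissonTerm x p * poissonTerm y q := by unfold poissonTerm; ring

lemma poissonTerm_le_fpois {x : ℝ} (hx : 0 < x) (j : ℕ) : poissonTerm x j ≤ fpois j x := by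
  simpa using le_hasSum (hasSum_fpois j x) 0 fun m _ => (poissonTerm_pos hx _).le

lemma fpois_pos {x : ℝ} (hx : 0 < x) (j : ℕ) : 0 < fpois j x :=
  (poissonTerm_pos hx j).trans_le (poissonTerm_le_fpois hx j)

lemma fpois_le_pow_div_factorial {x : ℝ} (hx : 0 ≤ x) (j : ℕ) :
    fpois j x ≤ x ^ j / j.factorial := by
  have hterm : ∀ m, poissonTerm x (m + j) ≤ x ^ j / j.factorial * poissonTerm x m := fun m =>
    calc poissonTerm x (m + j) ≤ Real.exp (-x) * x ^ (m + j) / (m.factorial * j.factorial) :=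
          div_le_div_of_nonneg_left (by positivity) (by positivity) (by
            exact_mod_cast Nat.le_of_dvd (Nat.factorial_pos _)
              (Nat.factorial_mul_factorial_dvd_factorial_add m j))
      _ = x ^ j / j.factorial * poissonTerm x m := by unfold poissonTerm; ring
  simpa using hasSum_le hterm (hasSum_fpois j x) ((hasSum_poissonTerm x).mul_left _)

noncomputable def poissonTailRatio (j : ℕ) (x : ℝ) : ℝ :=
  x * fpois j x / fpois (j + 1) x

lemma poissonTailRatio_strictMonoOn (j : ℕ) : StrictMonoOn (poissonTailRatio j) (Set.Ioi 0) := by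
  intro x (hx : 0 < x) y (hy : 0 < y) hxy
  have hc : StrictMono fun m : ℕ => ((m + j + 1 : ℕ) : ℝ) :=
    Nat.strictMono_cast.comp fun a b hab => by omega
  rw [poissonTailRatio, poissonTailRatio, div_lt_div_iff₀ (fpois_pos hx _) (fpois_pos hy _),
    ← (hasSum_mul_fpois j x).tsum_eq, ← (hasSum_mul_fpois j y).tsum_eq,
    ← (hasSum_fpois (j + 1) x).tsum_eq, ← (hasSum_fpois (j + 1) y).tsum_eq]
  exact tsum_mul_tsum_lt_tsum_mul_tsum_of_strictMono hc
    (hasSum_fpois (j + 1) x).summable (hasSum_fpois (j + 1) y).summable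
    (hasSum_mul_fpois j x).summable (hasSum_mul_fpois j y).summable
    fun p q hpq => poissonTerm_mul_poissonTerm_lt hx hxy (by omega)

lemma le_poissonTailRatio (j : ℕ) {x : ℝ} (hx : 0 < x) :
    ((j + 1 : ℕ) : ℝ) ≤ poissonTailRatio j x := by
  rw [poissonTailRatio, le_div_iff₀ (fpois_pos hx _)]
  refine hasSum_le (fun m => ?_) ((hasSum_fpois (j + 1) x).mul_left _) (hasSum_mul_fpois j x)
  exact mul_le_mul_of_nonneg_right (by exact_mod_cast (by omega : j + 1 ≤ m + j + 1))
    (poissonTerm_pos hx _).le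

lemma poissonTailRatio_le (j : ℕ) {x : ℝ} (hx : 0 < x) :
    poissonTailRatio j x ≤ (j + 1 : ℕ) * Real.exp x := by
  rw [poissonTailRatio, div_le_iff₀ (fpois_pos hx _)]
  calc x * fpois j x ≤ x * (x ^ j / j.factorial) :=
        mul_le_mul_of_nonneg_left (fpois_le_pow_div_factorial hx.le j) hx.le
    _ = (j + 1 : ℕ) * Real.exp x * poissonTerm x (j + 1) := by
        rw [poissonTerm, Nat.factorial_succ, Real.exp_neg]
        push_cast
        field_simp
        ring
    _ ≤ (j + 1 : ℕ) * Real.exp x * fpois (j + 1) x :=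
        mul_le_mul_of_nonneg_left (poissonTerm_le_fpois hx _) (by positivity)

lemma tendsto_poissonTailRatio (j : ℕ) :
    Tendsto (poissonTailRatio j) (𝓝[>] 0) (𝓝 ((j + 1 : ℕ) : ℝ)) := by
  have hexp : Tendsto (fun x => ((j + 1 : ℕ) : ℝ) * Real.exp x) (𝓝[>] 0)
      (𝓝 ((j + 1 : ℕ) : ℝ)) := by
    simpa only [Real.exp_zero, mul_one] using
      ((Real.continuous_exp.tendsto 0).mono_left nhdsWithin_le_nhds).const_mul _
  exact tendsto_of_tendsto_of_tendsto_of_le_of_le' tendsto_const_nhds hexp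
    (eventually_nhdsWithin_of_forall fun x hx => le_poissonTailRatio j hx)
    (eventually_nhdsWithin_of_forall fun x hx => poissonTailRatio_le j hx)

theorem stmt18 (k : ℕ) (hk : 1 ≤ k) :
    StrictMonoOn (fun x : ℝ => x * fpois (k - 1) x / fpois k x) (Set.Ioi 0) ∧
    Tendsto (fun x : ℝ => x * fpois (k - 1) x / fpois k x)
      (nhdsWithin 0 (Set.Ioi 0)) (nhds (k : ℝ)) := by
  obtain ⟨j, rfl⟩ : ∃ j, k = j + 1 := ⟨k - 1, by omega⟩
  simp only [Nat.add_sub_cancel]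
  exact ⟨poissonTailRatio_strictMonoOn j, tendsto_poissonTailRatio j⟩
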